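/- arXiv:2312.04863 — 4 statements merged into one kernel-verified Lean document; each statement's English description precedes it below -/
import Mathlib

section
/- (Markov chain Pinsker's inequality) Let M and L be transition matrices on 𝒳 with L(x,y) > 0 for all x,y. Then for every α ∈ (0,1), (α/2) · TV²(M,L) ≤ R_α(M‖L); moreover (1/2) · TV²(M,L) ≤ D_KL(M‖L). -/
open Finset

/-- A transition matrix on a finite state space `X`: nonnegative entries, rows sum to one. -/
def IsTransMat {X : Type*} [Fintype X] (M : X → X → ℝ) : Prop :=
  (∀ x y, 0 ≤ M x y) ∧ ∀ x, ∑ y, M x y = 1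

/-- The π-weighted α-divergence between transition matrices. -/
noncomputable def Dalpha {X : Type*} [Fintype X] (π : X → ℝ) (α : ℝ) (M L : X → X → ℝ) : ℝ :=
  (1 / (α - 1)) * ((∑ x, ∑ y, π x * L x y * (M x y / L x y) ^ α) - 1)

/-- The π-weighted Rényi divergence between transition matrices. -/
noncomputable def Ralpha {X : Type*} [Fintype X] (π : X → ℝ) (α : ℝ) (M L : X → X → ℝ) : ℝ :=
  (1 / (α - 1)) * Real.log (1 + (α - 1) * Dalpha π α M L)

/-- The π-weighted total variation distance. -/
noncomputable def TVdist {X : Type*} [Fintype X] (π : X → ℝ) (M L : X → X → ℝ) : ℝ :=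
  (1 / 2) * ∑ x, ∑ y, π x * |M x y - L x y|

/-- The π-weighted Kullback–Leibler divergence. -/
noncomputable def DKL {X : Type*} [Fintype X] (π : X → ℝ) (M L : X → X → ℝ) : ℝ :=
  ∑ x, ∑ y, if 0 < M x y then π x * M x y * Real.log (M x y / L x y) else 0

/-!
Both divergences of transition matrices are divergences between the joint laws
`P(x,y) = π(x) M(x,y)` and `Q(x,y) = π(x) L(x,y)` on `𝒳 × 𝒳`, and `TV(M,L)` is the total variation
distance between `P` and `Q`. Cauchy–Schwarz gives `TV² ≤ H := ∑ (√P - √Q)²`. Weighted AM–GM,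
`√P^α √Q^(1-α) ≤ α √P + (1-α) √Q`, squared and summed, gives `∑ P^α Q^(1-α) ≤ 1 - α(1-α) H`, hence
`R_α ≥ α H` by `log s ≤ s - 1`; and `log t ≥ 1 - 1/t` at `t = √(P/Q)` gives `D_KL ≥ H`.
-/

lemma rpow_mul_rpow_one_sub_le_sq {α p q : ℝ} (hα₀ : 0 ≤ α) (hα₁ : α ≤ 1)
    (hp : 0 ≤ p) (hq : 0 ≤ q) :
    p ^ α * q ^ (1 - α) ≤ (α * √p + (1 - α) * √q) ^ 2 := by
  have amgm := Real.geom_mean_le_arith_mean2_weighted hα₀ (sub_nonneg.2 hα₁)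
    (Real.sqrt_nonneg p) (Real.sqrt_nonneg q) (add_sub_cancel α 1)
  calc p ^ α * q ^ (1 - α) = (√p ^ α * √q ^ (1 - α)) ^ 2 := by
        rw [mul_pow, Real.rpow_pow_comm (Real.sqrt_nonneg p),
          Real.rpow_pow_comm (Real.sqrt_nonneg q), Real.sq_sqrt hp, Real.sq_sqrt hq]
    _ ≤ (α * √p + (1 - α) * √q) ^ 2 := by gcongr

lemma sq_sqrt_sub_sqrt_le_mul_log_div {p q : ℝ} (hp : 0 < p) (hq : 0 < q) :
    (√p - √q) ^ 2 ≤ p * Real.log (p / q) - p + q := by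
  have hsp : 0 < √p := Real.sqrt_pos.2 hp
  have hsq : 0 < √q := Real.sqrt_pos.2 hq
  have hlog : 1 - √q / √p ≤ Real.log (p / q) / 2 := by
    rw [← Real.log_sqrt (div_pos hp hq).le, Real.sqrt_div hp.le, ← inv_div]
    exact Real.one_sub_inv_le_log_of_pos (div_pos hsp hsq)
  have hcross : p * (√q / √p) = √p * √q := by
    field_simp
    rw [Real.sq_sqrt hp.le]
  nlinarith [mul_le_mul_of_nonneg_left hlog hp.le, Real.sq_sqrt hp.le, Real.sq_sqrt hq.le]

/-- Twice the squared Hellinger distance between two weight vectors. -/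
noncomputable def hellingerSq {ι : Type*} [Fintype ι] (p q : ι → ℝ) : ℝ :=
  ∑ i, (√(p i) - √(q i)) ^ 2

section FiniteDistribution

variable {ι : Type*} [Fintype ι] {p q : ι → ℝ}

lemma hellingerSq_nonneg : 0 ≤ hellingerSq p q :=
  Finset.sum_nonneg fun _ _ => sq_nonneg _

lemma sq_half_sum_abs_sub_le_hellingerSq (hp : ∀ i, 0 ≤ p i) (hq : ∀ i, 0 ≤ q i)
    (hp1 : ∑ i, p i = 1) (hq1 : ∑ i, q i = 1) :
    ((1 / 2) * ∑ i, |p i - q i|) ^ 2 ≤ hellingerSq p q := by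
  have hfactor : ∀ i, |√(p i) - √(q i)| * (√(p i) + √(q i)) = |p i - q i| := fun i => by
    rw [← abs_of_nonneg (by positivity : 0 ≤ √(p i) + √(q i)), ← abs_mul]
    congr 1
    linear_combination Real.sq_sqrt (hp i) - Real.sq_sqrt (hq i)
  have cauchySchwarz := Finset.sum_mul_sq_le_sq_mul_sq univ
    (fun i => |√(p i) - √(q i)|) (fun i => √(p i) + √(q i))
  simp only [hfactor, sq_abs] at cauchySchwarz
  have hsum : ∑ i, (√(p i) + √(q i)) ^ 2 ≤ 4 := calc
    ∑ i, (√(p i) + √(q i)) ^ 2 ≤ ∑ i, 2 * (p i + q i) := Finset.sum_le_sum fun i _ => by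
        nlinarith [sq_nonneg (√(p i) - √(q i)), Real.sq_sqrt (hp i), Real.sq_sqrt (hq i)]
    _ = 4 := by rw [← Finset.mul_sum, Finset.sum_add_distrib, hp1, hq1]; norm_num
  have hH : 0 ≤ ∑ i, (√(p i) - √(q i)) ^ 2 := hellingerSq_nonneg
  rw [hellingerSq]
  nlinarith [mul_le_mul_of_nonneg_left hsum hH]

lemma sum_rpow_mul_rpow_one_sub_le {α : ℝ} (hα₀ : 0 ≤ α) (hα₁ : α ≤ 1)
    (hp : ∀ i, 0 ≤ p i) (hq : ∀ i, 0 ≤ q i) (hp1 : ∑ i, p i = 1) (hq1 : ∑ i, q i = 1) :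
    ∑ i, p i ^ α * q i ^ (1 - α) ≤ 1 - α * (1 - α) * hellingerSq p q := calc
  ∑ i, p i ^ α * q i ^ (1 - α) ≤ ∑ i, (α * √(p i) + (1 - α) * √(q i)) ^ 2 :=
    Finset.sum_le_sum fun i _ => rpow_mul_rpow_one_sub_le_sq hα₀ hα₁ (hp i) (hq i)
  _ = ∑ i, (α * p i + (1 - α) * q i - α * (1 - α) * (√(p i) - √(q i)) ^ 2) :=
    Finset.sum_congr rfl fun i _ => by
      linear_combination α * Real.sq_sqrt (hp i) + (1 - α) * Real.sq_sqrt (hq i)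
  _ = 1 - α * (1 - α) * hellingerSq p q := by
    rw [Finset.sum_sub_distrib, Finset.sum_add_distrib, ← Finset.mul_sum, ← Finset.mul_sum,
      ← Finset.mul_sum, hp1, hq1, hellingerSq]
    ring

lemma sum_rpow_mul_rpow_pos {α : ℝ} (hp : ∀ i, 0 ≤ p i) (hq : ∀ i, 0 < q i)
    (hp1 : ∑ i, p i = 1) : 0 < ∑ i, p i ^ α * q i ^ (1 - α) := by
  obtain ⟨i, -, hpi⟩ := Finset.exists_lt_of_sum_lt (s := univ) (f := 0) (g := p)
    (by simp [hp1])
  exact Finset.sum_pos'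
    (fun j _ => mul_nonneg (Real.rpow_nonneg (hp j) _) (Real.rpow_nonneg (hq j).le _))
    ⟨i, mem_univ i, mul_pos (Real.rpow_pos_of_pos hpi _) (Real.rpow_pos_of_pos (hq i) _)⟩

lemma hellingerSq_le_sum_mul_log_div (hp : ∀ i, 0 ≤ p i) (hq : ∀ i, 0 < q i)
    (hp1 : ∑ i, p i = 1) (hq1 : ∑ i, q i = 1) :
    hellingerSq p q ≤ ∑ i, if 0 < p i then p i * Real.log (p i / q i) else 0 := calc
  hellingerSq p q ≤ ∑ i, ((if 0 < p i then p i * Real.log (p i / q i) else 0) - p i + q i) :=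
    Finset.sum_le_sum fun i _ => by
      rcases (hp i).lt_or_eq with hpi | hpi
      · rw [if_pos hpi]; exact sq_sqrt_sub_sqrt_le_mul_log_div hpi (hq i)
      · simp [← hpi, Real.sq_sqrt (hq i).le]
  _ = ∑ i, if 0 < p i then p i * Real.log (p i / q i) else 0 := by
    rw [Finset.sum_add_distrib, Finset.sum_sub_distrib, hp1, hq1]
    ring

lemma mul_hellingerSq_le_renyi {α : ℝ} (hα₀ : 0 ≤ α) (hα₁ : α < 1)
    (hp : ∀ i, 0 ≤ p i) (hq : ∀ i, 0 < q i) (hp1 : ∑ i, p i = 1) (hq1 : ∑ i, q i = 1) :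
    α * hellingerSq p q ≤ 1 / (α - 1) * Real.log (∑ i, p i ^ α * q i ^ (1 - α)) := by
  have hlog := Real.log_le_sub_one_of_pos (sum_rpow_mul_rpow_pos (α := α) hp hq hp1)
  have hsum := sum_rpow_mul_rpow_one_sub_le hα₀ hα₁.le hp (fun i => (hq i).le) hp1 hq1
  rw [one_div_mul_eq_div, le_div_iff_of_neg (sub_neg.2 hα₁)]
  linarith

end FiniteDistribution

def jointDist {X : Type*} (π : X → ℝ) (M : X → X → ℝ) (z : X × X) : ℝ :=
  π z.1 * M z.1 z.2

section MarkovChain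

variable {X : Type*} [Fintype X] {π : X → ℝ} {M L : X → X → ℝ}

lemma IsTransMat.sum_jointDist (hM : IsTransMat M) (hπ1 : ∑ x, π x = 1) :
    ∑ z, jointDist π M z = 1 := by
  simp only [jointDist, Fintype.sum_prod_type, ← Finset.mul_sum, hM.2, mul_one, hπ1]

lemma TVdist_eq_half_sum_abs_sub (hπ : ∀ x, 0 ≤ π x) :
    TVdist π M L = 1 / 2 * ∑ z, |jointDist π M z - jointDist π L z| := by
  simp only [TVdist, jointDist, Fintype.sum_prod_type, ← mul_sub, abs_mul, abs_of_nonneg (hπ _)]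

lemma one_add_mul_Dalpha_eq {α : ℝ} (hα : α ≠ 1) (hπ : ∀ x, 0 < π x)
    (hM : ∀ x y, 0 ≤ M x y) (hL : ∀ x y, 0 < L x y) :
    1 + (α - 1) * Dalpha π α M L = ∑ z, jointDist π M z ^ α * jointDist π L z ^ (1 - α) := by
  rw [Dalpha, ← mul_assoc, mul_one_div_cancel (sub_ne_zero.2 hα), one_mul, add_sub_cancel,
    Fintype.sum_prod_type]
  refine Finset.sum_congr rfl fun x _ => Finset.sum_congr rfl fun y _ => ?_
  rw [jointDist, jointDist, Real.mul_rpow (hπ x).le (hM x y), Real.mul_rpow (hπ x).le (hL x y).le,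
    Real.div_rpow (hM x y) (hL x y).le, Real.rpow_sub (hL x y), Real.rpow_sub (hπ x),
    Real.rpow_one, Real.rpow_one]
  have hπα : π x ^ α ≠ 0 := (Real.rpow_pos_of_pos (hπ x) α).ne'
  have hLα : L x y ^ α ≠ 0 := (Real.rpow_pos_of_pos (hL x y) α).ne'
  field_simp

lemma DKL_eq_sum_mul_log_div (hπ : ∀ x, 0 < π x) :
    DKL π M L = ∑ z, if 0 < jointDist π M z then
      jointDist π M z * Real.log (jointDist π M z / jointDist π L z) else 0 := by
  simp only [DKL, jointDist, Fintype.sum_prod_type, mul_div_mul_left _ _ (hπ _).ne',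
    mul_pos_iff_of_pos_left (hπ _)]

end MarkovChain

theorem stmt6_general {X : Type*} [Fintype X]
    (π : X → ℝ) (hπ : ∀ x, 0 < π x) (hπ1 : ∑ x, π x = 1)
    (M L : X → X → ℝ) (hM : IsTransMat M) (hL : IsTransMat L)
    (hLpos : ∀ x y, 0 < L x y) :
    (∀ α ∈ Set.Ioo (0 : ℝ) 1, α / 2 * TVdist π M L ^ 2 ≤ Ralpha π α M L) ∧
    1 / 2 * TVdist π M L ^ 2 ≤ DKL π M L := by
  have hP0 (z : X × X) : 0 ≤ jointDist π M z := mul_nonneg (hπ z.1).le (hM.1 _ _)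
  have hQ0 (z : X × X) : 0 < jointDist π L z := mul_pos (hπ z.1) (hLpos _ _)
  have hP1 := hM.sum_jointDist hπ1
  have hQ1 := hL.sum_jointDist hπ1
  have hTV : TVdist π M L ^ 2 ≤ hellingerSq (jointDist π M) (jointDist π L) := by
    rw [TVdist_eq_half_sum_abs_sub fun x => (hπ x).le]
    exact sq_half_sum_abs_sub_le_hellingerSq hP0 (fun z => (hQ0 z).le) hP1 hQ1
  have hTV_sq := sq_nonneg (TVdist π M L)
  refine ⟨fun α ⟨hα₀, hα₁⟩ => ?_, ?_⟩
  · rw [Ralpha, one_add_mul_Dalpha_eq hα₁.ne hπ hM.1 hLpos]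
    calc α / 2 * TVdist π M L ^ 2 ≤ α * hellingerSq (jointDist π M) (jointDist π L) := by
          nlinarith
      _ ≤ _ := mul_hellingerSq_le_renyi hα₀.le hα₁ hP0 hQ0 hP1 hQ1
  · rw [DKL_eq_sum_mul_log_div hπ]
    calc 1 / 2 * TVdist π M L ^ 2 ≤ hellingerSq (jointDist π M) (jointDist π L) := by linarith
      _ ≤ _ := hellingerSq_le_sum_mul_log_div hP0 hQ0 hP1 hQ1

/-- Markov chain Pinsker's inequality. -/
theorem stmt6 {X : Type*} [Fintype X] [Nonempty X]
    (π : X → ℝ) (hπ : ∀ x, 0 < π x) (hπ1 : ∑ x, π x = 1)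
    (M L : X → X → ℝ) (hM : IsTransMat M) (hL : IsTransMat L)
    (hLpos : ∀ x y, 0 < L x y) :
    (∀ α ∈ Set.Ioo (0 : ℝ) 1, α / 2 * TVdist π M L ^ 2 ≤ Ralpha π α M L) ∧
    1 / 2 * TVdist π M L ^ 2 ≤ DKL π M L :=
  stmt6_general π hπ hπ1 M L hM hL hLpos
end

section
/- (Weak triangle inequality) Let α > 1 and let U, V, W be transition matrices on 𝒳 with V(x,y) > 0 and W(x,y) > 0 for all x,y. Then R_α(U‖V) ≤ ((2α−1)/(2α−2)) · R_{2α}(U‖W) + R_{2α−1}(W‖V). -/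
open Finset

/-!
Writing `S_α(M‖L) = ∑ π(x) L(x,y) (M(x,y)/L(x,y))^α`, one has `R_α = log S_α / (α - 1)`.
Each term of `S_α(U‖V)` is the geometric mean of the corresponding terms of `S_{2α}(U‖W)` and
`S_{2α-1}(W‖V)`, so Cauchy–Schwarz gives `S_α(U‖V)² ≤ S_{2α}(U‖W) · S_{2α-1}(W‖V)`.
Taking logarithms and dividing by `2(α - 1)` is exactly the weak triangle inequality.
-/

noncomputable def renyiSum {X : Type*} [Fintype X] (π : X → ℝ) (α : ℝ) (M L : X → X → ℝ) : ℝ :=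
  ∑ x, ∑ y, π x * L x y * (M x y / L x y) ^ α

section RenyiSum

variable {X : Type*} [Fintype X] (π : X → ℝ) (M L : X → X → ℝ)

lemma Ralpha_eq_log_renyiSum {α : ℝ} (hα : α ≠ 1) :
    Ralpha π α M L = Real.log (renyiSum π α M L) / (α - 1) := by
  have hα' : α - 1 ≠ 0 := sub_ne_zero.mpr hα
  rw [Ralpha, Dalpha, renyiSum, ← mul_assoc, mul_one_div_cancel hα', one_mul, add_sub_cancel,
    one_div_mul_eq_div]

lemma renyiSum_pos [Nonempty X] (α : ℝ) (hπ : ∀ x, 0 < π x) (hM : IsTransMat M)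
    (hL : ∀ x y, 0 < L x y) : 0 < renyiSum π α M L := by
  refine sum_pos (fun x _ => ?_) univ_nonempty
  obtain ⟨y, -, hy⟩ : ∃ y ∈ univ, (0 : ℝ) < M x y :=
    exists_lt_of_sum_lt (by simp [hM.2 x])
  refine sum_pos' (fun z _ => by have := hM.1 x z; have := hL x z; have := hπ x; positivity)
    ⟨y, mem_univ y, ?_⟩
  have := hL x y
  have := hπ x
  positivity

end RenyiSum

lemma sq_mul_div_rpow_eq {p u v w : ℝ} (hu : 0 ≤ u) (hv : 0 < v) (hw : 0 < w) (β : ℝ) :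
    (p * v * (u / v) ^ β) ^ 2
      = (p * w * (u / w) ^ (2 * β)) * (p * v * (w / v) ^ (2 * β - 1)) := by
  have hwv : 0 < w / v := div_pos hw hv
  have hchain : (u / w) ^ (2 * β) * (w / v) ^ (2 * β) = (u / v) ^ (2 * β) := by
    rw [← Real.mul_rpow (div_nonneg hu hw.le) hwv.le, div_mul_div_cancel₀ hw.ne']
  have hsq : (u / v) ^ (2 * β) = ((u / v) ^ β) ^ 2 := by
    rw [mul_comm, Real.rpow_mul (div_nonneg hu hv.le), Real.rpow_two]
  rw [Real.rpow_sub_one hwv.ne']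
  calc (p * v * (u / v) ^ β) ^ 2 = (p * v) ^ 2 * (u / v) ^ (2 * β) := by rw [hsq]; ring
    _ = _ := by rw [← hchain]; field_simp

lemma renyiSum_sq_le {X : Type*} [Fintype X] {π : X → ℝ} {U V W : X → X → ℝ}
    (hπ : ∀ x, 0 ≤ π x) (hU : ∀ x y, 0 ≤ U x y) (hV : ∀ x y, 0 < V x y)
    (hW : ∀ x y, 0 < W x y) (α : ℝ) :
    renyiSum π α U V ^ 2 ≤ renyiSum π (2 * α) U W * renyiSum π (2 * α - 1) W V := by
  simp only [renyiSum, ← Fintype.sum_prod_type']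
  refine sum_sq_le_sum_mul_sum_of_sq_le_mul _ (fun i _ => ?_) (fun i _ => ?_)
    (fun i _ => (sq_mul_div_rpow_eq (hU i.1 i.2) (hV i.1 i.2) (hW i.1 i.2) α).le)
  · have := hπ i.1; have := hU i.1 i.2; have := hW i.1 i.2; positivity
  · have := hπ i.1; have := hW i.1 i.2; have := hV i.1 i.2; positivity

lemma two_mul_log_le_log_add_log {a b c : ℝ} (ha : 0 < a) (habc : a ^ 2 ≤ b * c) :
    2 * Real.log a ≤ Real.log b + Real.log c := by
  have hbc : b * c ≠ 0 := (pow_pos ha 2).trans_le habc |>.ne'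
  have h := Real.log_le_log (pow_pos ha 2) habc
  rwa [Real.log_pow, Real.log_mul (left_ne_zero_of_mul hbc) (right_ne_zero_of_mul hbc),
    Nat.cast_ofNat] at h

theorem stmt9_general {X : Type*} [Fintype X] [Nonempty X]
    (π : X → ℝ) (hπ : ∀ x, 0 < π x)
    (α : ℝ) (hα : 1 < α)
    (U V W : X → X → ℝ) (hU : IsTransMat U)
    (hVpos : ∀ x y, 0 < V x y) (hWpos : ∀ x y, 0 < W x y) :
    Ralpha π α U V ≤ (2 * α - 1) / (2 * α - 2) * Ralpha π (2 * α) U W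
      + Ralpha π (2 * α - 1) W V := by
  have hlog := two_mul_log_le_log_add_log (renyiSum_pos π U V α hπ hU hVpos)
    (renyiSum_sq_le (fun x => (hπ x).le) hU.1 hVpos hWpos α)
  rw [Ralpha_eq_log_renyiSum _ _ _ hα.ne', Ralpha_eq_log_renyiSum _ _ _ (by linarith),
    Ralpha_eq_log_renyiSum _ _ _ (by linarith)]
  calc Real.log (renyiSum π α U V) / (α - 1)
      = 2 * Real.log (renyiSum π α U V) / (2 * α - 2) := by
        rw [show 2 * α - 2 = 2 * (α - 1) by ring, mul_div_mul_left _ _ two_ne_zero]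
    _ ≤ (Real.log (renyiSum π (2 * α) U W) + Real.log (renyiSum π (2 * α - 1) W V))
          / (2 * α - 2) := div_le_div_of_nonneg_right hlog (by linarith)
    _ = _ := by
        have h2α : 2 * α - 1 ≠ 0 := by linarith
        rw [show 2 * α - 1 - 1 = 2 * α - 2 by ring]
        field_simp

/-- Weak triangle inequality for the Rényi divergence. -/
theorem stmt9 {X : Type*} [Fintype X] [Nonempty X]
    (π : X → ℝ) (hπ : ∀ x, 0 < π x) (hπ1 : ∑ x, π x = 1)
    (α : ℝ) (hα : 1 < α)
    (U V W : X → X → ℝ) (hU : IsTransMat U) (hV : IsTransMat V) (hW : IsTransMat W)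
    (hVpos : ∀ x y, 0 < V x y) (hWpos : ∀ x y, 0 < W x y) :
    Ralpha π α U V ≤ (2 * α - 1) / (2 * α - 2) * Ralpha π (2 * α) U W
      + Ralpha π (2 * α - 1) W V :=
  stmt9_general π hπ α hα U V W hU hVpos hWpos
end

section
/- Let f : ℝ≥0 → ℝ be convex with f(1) = 0 and let P be a transition matrix on 𝒳. Then the ergodicity coefficient on the space of transition matrices equals the one on the space of probability measures: η^f(P) = η̃^f(P). Moreover, for every α ∈ (0,1) ∪ (1,∞), the Rényi ergodicity coefficients satisfy η^{(R_α)}(P) ≥ η̃^{(R_α)}(P). -/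
open Finset Filter
open scoped ENNReal

/-- A probability mass function on a finite state space `X`. -/
def IsProb {X : Type*} [Fintype X] (μ : X → ℝ) : Prop :=
  (∀ x, 0 ≤ μ x) ∧ ∑ x, μ x = 1

/-- `f'(∞) := lim_{x→0⁺} x f(1/x)` in the extended reals. -/
noncomputable def fDerivInfty (f : ℝ → ℝ) : EReal :=
  limUnder (nhdsWithin (0 : ℝ) (Set.Ioi 0)) fun x => ((x * f (1 / x) : ℝ) : EReal)

/-- The extended-real-valued π-weighted f-divergence between transition matrices, with the
conventions `0·f(0/0) := 0` and `0·f(a/0) := a·f'(∞)` for `a > 0`. -/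
noncomputable def DfE {X : Type*} [Fintype X] (π : X → ℝ) (f : ℝ → ℝ)
    (M L : X → X → ℝ) : EReal :=
  ∑ x, ∑ y,
    if L x y = 0 then
      (if M x y = 0 then 0 else ((π x * M x y : ℝ) : EReal) * fDerivInfty f)
    else ((π x * L x y * f (M x y / L x y) : ℝ) : EReal)

/-- The extended-real-valued f-divergence between probability measures, with the same
conventions. -/
noncomputable def DtfE {X : Type*} [Fintype X] (f : ℝ → ℝ) (μ ν : X → ℝ) : EReal :=
  ∑ x,
    if ν x = 0 then (if μ x = 0 then 0 else ((μ x : ℝ) : EReal) * fDerivInfty f)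
    else ((ν x * f (μ x / ν x) : ℝ) : EReal)

/-- The inner sum of the extended-real-valued π-weighted α-divergence. -/
noncomputable def DalphaSumE {X : Type*} [Fintype X] (π : X → ℝ) (α : ℝ)
    (M L : X → X → ℝ) : ℝ≥0∞ :=
  ∑ x, ∑ y,
    if L x y = 0 then (if M x y = 0 then 0 else if 1 < α then ⊤ else 0)
    else ENNReal.ofReal (π x * L x y * (M x y / L x y) ^ α)

/-- The extended-real-valued π-weighted α-divergence. -/
noncomputable def DalphaE {X : Type*} [Fintype X] (π : X → ℝ) (α : ℝ)
    (M L : X → X → ℝ) : EReal :=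
  ((1 / (α - 1) : ℝ) : EReal) * ((DalphaSumE π α M L : EReal) - 1)

/-- The extended-real-valued π-weighted Rényi divergence. -/
noncomputable def RalphaE {X : Type*} [Fintype X] (π : X → ℝ) (α : ℝ)
    (M L : X → X → ℝ) : EReal :=
  if DalphaE π α M L = ⊤ then ⊤
  else (((1 / (α - 1)) * Real.log (1 + (α - 1) * (DalphaE π α M L).toReal) : ℝ) : EReal)

/-- The inner sum of the extended-real-valued α-divergence of probability measures. -/
noncomputable def DtalphaSumE {X : Type*} [Fintype X] (α : ℝ) (μ ν : X → ℝ) : ℝ≥0∞ :=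
  ∑ x,
    if ν x = 0 then (if μ x = 0 then 0 else if 1 < α then ⊤ else 0)
    else ENNReal.ofReal (ν x * (μ x / ν x) ^ α)

/-- The extended-real-valued α-divergence of probability measures. -/
noncomputable def DtalphaE {X : Type*} [Fintype X] (α : ℝ) (μ ν : X → ℝ) : EReal :=
  ((1 / (α - 1) : ℝ) : EReal) * ((DtalphaSumE α μ ν : EReal) - 1)

/-- The extended-real-valued Rényi divergence of probability measures. -/
noncomputable def RtalphaE {X : Type*} [Fintype X] (α : ℝ) (μ ν : X → ℝ) : EReal :=
  if DtalphaE α μ ν = ⊤ then ⊤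
  else (((1 / (α - 1)) * Real.log (1 + (α - 1) * (DtalphaE α μ ν).toReal) : ℝ) : EReal)

/-- Right action of a transition matrix on a transition matrix. -/
def matMul {X : Type*} [Fintype X] (M P : X → X → ℝ) : X → X → ℝ :=
  fun x y => ∑ z, M x z * P z y

/-- Right action of a transition matrix on a probability measure. -/
def vecMul {X : Type*} [Fintype X] (μ : X → ℝ) (P : X → X → ℝ) : X → ℝ :=
  fun y => ∑ x, μ x * P x y

/-- The f-divergence ergodicity coefficient on the space of transition matrices. -/
noncomputable def etaF {X : Type*} [Fintype X] (π : X → ℝ) (f : ℝ → ℝ)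
    (P : X → X → ℝ) : EReal :=
  sSup {r : EReal | ∃ M L : X → X → ℝ, IsTransMat M ∧ IsTransMat L ∧ M ≠ L ∧
    0 < DfE π f M L ∧ DfE π f M L ≠ ⊤ ∧
    r = DfE π f (matMul M P) (matMul L P) * ((((DfE π f M L).toReal)⁻¹ : ℝ) : EReal)}

/-- The f-divergence ergodicity coefficient on the space of probability measures. -/
noncomputable def etaTF {X : Type*} [Fintype X] (f : ℝ → ℝ) (P : X → X → ℝ) : EReal :=
  sSup {r : EReal | ∃ μ ν : X → ℝ, IsProb μ ∧ IsProb ν ∧ μ ≠ ν ∧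
    0 < DtfE f μ ν ∧ DtfE f μ ν ≠ ⊤ ∧
    r = DtfE f (vecMul μ P) (vecMul ν P) * ((((DtfE f μ ν).toReal)⁻¹ : ℝ) : EReal)}

/-- The Rényi ergodicity coefficient on the space of transition matrices. -/
noncomputable def etaR {X : Type*} [Fintype X] (π : X → ℝ) (α : ℝ)
    (P : X → X → ℝ) : EReal :=
  sSup {r : EReal | ∃ M L : X → X → ℝ, IsTransMat M ∧ IsTransMat L ∧ M ≠ L ∧
    0 < RalphaE π α M L ∧ RalphaE π α M L ≠ ⊤ ∧
    r = RalphaE π α (matMul M P) (matMul L P) *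
      ((((RalphaE π α M L).toReal)⁻¹ : ℝ) : EReal)}

/-- The Rényi ergodicity coefficient on the space of probability measures. -/
noncomputable def etaTR {X : Type*} [Fintype X] (α : ℝ) (P : X → X → ℝ) : EReal :=
  sSup {r : EReal | ∃ μ ν : X → ℝ, IsProb μ ∧ IsProb ν ∧ μ ≠ ν ∧
    0 < RtalphaE α μ ν ∧ RtalphaE α μ ν ≠ ⊤ ∧
    r = RtalphaE α (vecMul μ P) (vecMul ν P) *
      ((((RtalphaE α μ ν).toReal)⁻¹ : ℝ) : EReal)}

/-!
Writing `D_f(M‖L) = ∑ₓ π(x) D̃_f(M(x,·)‖L(x,·))` and noting that `(MP)(x,·) = M(x,·)P`, every row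
contracts by at most `η̃^f(P)` (a row with `D̃_f = 0` by the data-processing inequality), so
`η^f(P) ≤ η̃^f(P)`. Conversely, matrices with constant rows `μ`, `ν` have `D_f(M‖L) = D̃_f(μ‖ν)`
because `∑ π = 1`; the same embedding gives `η̃^{(R_α)}(P) ≤ η^{(R_α)}(P)`.

The data-processing inequality is subadditivity of the perspective `(a, b) ↦ b f(a / b)`. Where
`b = 0` it needs `f'(∞)` to be the supremum of the secant slopes of `f` from any `u ≥ 0`, which
follows from monotonicity of these slopes.
-/

open Set
open scoped Topology

namespace EReal

lemma coe_finset_sum {ι : Type*} (s : Finset ι) (c : ι → ℝ) :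
    ((∑ i ∈ s, c i : ℝ) : EReal) = ∑ i ∈ s, (c i : EReal) :=
  map_sum (⟨⟨Real.toEReal, coe_zero⟩, coe_add⟩ : ℝ →+ EReal) c s

lemma coe_mul_finset_sum {ι : Type*} (s : Finset ι) {c : ℝ} (hc : 0 ≤ c) (a : ι → EReal) :
    (c : EReal) * ∑ i ∈ s, a i = ∑ i ∈ s, (c : EReal) * a i := by
  induction s using Finset.cons_induction with
  | empty => simp
  | cons j s hj ih =>
    rw [sum_cons, sum_cons,
      left_distrib_of_nonneg_of_ne_top (EReal.coe_nonneg.2 hc) (coe_ne_top c), ih]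

lemma mul_finset_sum_of_nonneg {ι : Type*} (s : Finset ι) (c : EReal) {a : ι → EReal}
    (ha : ∀ i ∈ s, 0 ≤ a i) : c * ∑ i ∈ s, a i = ∑ i ∈ s, c * a i := by
  induction s using Finset.cons_induction with
  | empty => simp
  | cons j s hj ih =>
    have ha' : ∀ i ∈ s, 0 ≤ a i := fun i hi => ha i (mem_cons_of_mem hi)
    rw [sum_cons, sum_cons, left_distrib_of_nonneg (ha j (mem_cons_self j s)) (sum_nonneg ha'),
      ih ha']

lemma finset_sum_mul_of_nonneg {ι : Type*} (s : Finset ι) {c : ι → EReal}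
    (hc : ∀ i ∈ s, 0 ≤ c i) (a : EReal) : (∑ i ∈ s, c i) * a = ∑ i ∈ s, c i * a := by
  simpa only [mul_comm] using mul_finset_sum_of_nonneg s a hc

end EReal

section RecessionSlope

variable {f : ℝ → ℝ}

/-- Since `f t / t = (1 - u / t) · (f t - f u) / (t - u) + f u / t`, the limit of `f t / t` is
that of the secant slopes from `u`, which increase by convexity. -/
lemma ConvexOn.tendsto_div_atTop_iSup_slope (hf : ConvexOn ℝ (Ici 0) f) {u : ℝ} (hu : 0 ≤ u) :
    Tendsto (fun t => ((f t / t : ℝ) : EReal)) atTop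
      (𝓝 (⨆ t : Ioi u, (((f t - f u) / (t - u) : ℝ) : EReal))) := by
  set S := ⨆ t : Ioi u, (((f t - f u) / (t - u) : ℝ) : EReal)
  have hmono : Monotone fun t : Ioi u => (((f t - f u) / (t - u) : ℝ) : EReal) :=
    fun s t hst => EReal.coe_le_coe_iff.2 <| hf.secant_mono (mem_Ici.2 hu)
      (mem_Ici.2 (hu.trans s.2.le)) (mem_Ici.2 (hu.trans t.2.le)) s.2.ne' t.2.ne' hst
  have hslope : Tendsto (fun t => (((f t - f u) / (t - u) : ℝ) : EReal)) atTop (𝓝 S) := by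
    have hlift : Tendsto (fun t : ℝ => (⟨max t (u + 1), by simp⟩ : Ioi u)) atTop atTop :=
      tendsto_Ioi_atTop.2 (tendsto_atTop_mono (fun _ => le_max_left _ _) tendsto_id)
    refine ((tendsto_atTop_iSup hmono).comp hlift).congr' ?_
    filter_upwards [eventually_ge_atTop (u + 1)] with t ht
    simp [max_eq_left ht]
  have hscale : Tendsto (fun t : ℝ => ((1 - u / t : ℝ) : EReal)) atTop (𝓝 1) := by
    have h : Tendsto (fun t : ℝ => 1 - u / t) atTop (𝓝 (1 - 0)) :=
      tendsto_const_nhds.sub (tendsto_const_nhds.div_atTop tendsto_id)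
    simpa using EReal.tendsto_coe.2 h
  have hrest : Tendsto (fun t : ℝ => ((f u / t : ℝ) : EReal)) atTop (𝓝 0) :=
    EReal.tendsto_coe.2 (tendsto_const_nhds.div_atTop tendsto_id)
  have hsum := (EReal.continuousAt_add (p := (1 * S, 0)) (Or.inr (by simp))
    (Or.inr (by simp))).tendsto.comp ((EReal.Tendsto.mul hscale hslope (Or.inl one_ne_zero)
      (Or.inl one_ne_zero) (Or.inl (EReal.coe_ne_bot 1))
      (Or.inl (EReal.coe_ne_top 1))).prodMk_nhds hrest)
  rw [one_mul, add_zero] at hsum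
  refine hsum.congr' ?_
  filter_upwards [eventually_gt_atTop (u + 1)] with t ht
  have ht0 : t ≠ 0 := by linarith
  have htu : t - u ≠ 0 := by linarith
  simp only [Function.comp_apply, ← EReal.coe_mul, ← EReal.coe_add, EReal.coe_eq_coe_iff]
  field_simp
  ring

lemma ConvexOn.fDerivInfty_eq_iSup_slope (hf : ConvexOn ℝ (Ici 0) f) {u : ℝ} (hu : 0 ≤ u) :
    fDerivInfty f = ⨆ t : Ioi u, (((f t - f u) / (t - u) : ℝ) : EReal) := by
  refine Tendsto.limUnder_eq
    (((hf.tendsto_div_atTop_iSup_slope hu).comp tendsto_inv_nhdsGT_zero).congr fun x => ?_)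
  simp [div_inv_eq_mul, mul_comm]

lemma ConvexOn.le_add_mul_fDerivInfty (hf : ConvexOn ℝ (Ici 0) f) {u v : ℝ} (hu : 0 ≤ u)
    (huv : u ≤ v) : (f v : EReal) ≤ f u + ((v - u : ℝ) : EReal) * fDerivInfty f := by
  rcases huv.eq_or_lt with rfl | huv
  · simp
  have hslope : (((f v - f u) / (v - u) : ℝ) : EReal) ≤ fDerivInfty f := by
    rw [hf.fDerivInfty_eq_iSup_slope hu]
    exact le_iSup_of_le (⟨v, huv⟩ : Ioi u) le_rfl
  calc (f v : EReal) = f u + ((v - u : ℝ) : EReal) * (((f v - f u) / (v - u) : ℝ) : EReal) := by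
        rw [← EReal.coe_mul, ← EReal.coe_add, mul_div_cancel₀ _ (sub_ne_zero.2 huv.ne'),
          add_sub_cancel]
    _ ≤ f u + ((v - u : ℝ) : EReal) * fDerivInfty f := by
        gcongr

end RecessionSlope

section Perspective

variable {f : ℝ → ℝ}

noncomputable def perspective (f : ℝ → ℝ) (a b : ℝ) : EReal :=
  if b = 0 then (if a = 0 then 0 else (a : EReal) * fDerivInfty f)
  else ((b * f (a / b) : ℝ) : EReal)

lemma perspective_zero_right (a : ℝ) : perspective f a 0 = (a : EReal) * fDerivInfty f := by
  by_cases ha : a = 0 <;> simp [perspective, ha]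

lemma perspective_of_ne_zero {b : ℝ} (hb : b ≠ 0) (a : ℝ) :
    perspective f a b = ((b * f (a / b) : ℝ) : EReal) := if_neg hb

lemma perspective_self (hf1 : f 1 = 0) (a : ℝ) : perspective f a a = 0 := by
  rcases eq_or_ne a 0 with rfl | ha
  · simp [perspective]
  · simp [perspective_of_ne_zero ha, div_self ha, hf1]

lemma perspective_mul_mul {c : ℝ} (hc : 0 ≤ c) (a b : ℝ) :
    perspective f (c * a) (c * b) = (c : EReal) * perspective f a b := by
  rcases hc.eq_or_lt with rfl | hc
  · simp [perspective]
  rcases eq_or_ne b 0 with rfl | hb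
  · simp only [mul_zero, perspective_zero_right, EReal.coe_mul, mul_assoc]
  · rw [perspective_of_ne_zero (mul_ne_zero hc.ne' hb), perspective_of_ne_zero hb,
      mul_div_mul_left a b hc.ne', ← EReal.coe_mul, mul_assoc]

lemma ConvexOn.perspective_add_le_add_zero (hf : ConvexOn ℝ (Ici 0) f) {a₁ a₂ b : ℝ}
    (ha₁ : 0 ≤ a₁) (ha₂ : 0 ≤ a₂) (hb : 0 ≤ b) :
    perspective f (a₁ + a₂) b ≤ perspective f a₁ b + perspective f a₂ 0 := by
  rcases hb.eq_or_lt with rfl | hb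
  · simp only [perspective_zero_right, EReal.coe_add]
    exact (EReal.right_distrib_of_nonneg (EReal.coe_nonneg.2 ha₁)
      (EReal.coe_nonneg.2 ha₂)).le
  have hslope := hf.le_add_mul_fDerivInfty (div_nonneg ha₁ hb.le)
    (div_le_div_of_nonneg_right (le_add_of_nonneg_right ha₂) hb.le)
  rw [perspective_of_ne_zero hb.ne', perspective_of_ne_zero hb.ne', perspective_zero_right,
    EReal.coe_mul]
  calc (b : EReal) * f ((a₁ + a₂) / b)
      ≤ (b : EReal) * (f (a₁ / b) + (((a₁ + a₂) / b - a₁ / b : ℝ) : EReal) * fDerivInfty f) := by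
        gcongr
    _ = ((b * f (a₁ / b) : ℝ) : EReal) + (a₂ : EReal) * fDerivInfty f := by
        rw [EReal.left_distrib_of_nonneg_of_ne_top (EReal.coe_nonneg.2 hb.le)
          (EReal.coe_ne_top b), ← mul_assoc, ← EReal.coe_mul, ← EReal.coe_mul]
        congr 3
        field_simp
        ring

lemma ConvexOn.perspective_add_le (hf : ConvexOn ℝ (Ici 0) f) {a₁ a₂ b₁ b₂ : ℝ}
    (ha₁ : 0 ≤ a₁) (ha₂ : 0 ≤ a₂) (hb₁ : 0 ≤ b₁) (hb₂ : 0 ≤ b₂) :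
    perspective f (a₁ + a₂) (b₁ + b₂) ≤ perspective f a₁ b₁ + perspective f a₂ b₂ := by
  rcases hb₂.eq_or_lt with rfl | hb₂
  · simpa using hf.perspective_add_le_add_zero ha₁ ha₂ hb₁
  rcases hb₁.eq_or_lt with rfl | hb₁
  · simpa [add_comm] using hf.perspective_add_le_add_zero ha₂ ha₁ hb₂.le
  have hb : 0 < b₁ + b₂ := add_pos hb₁ hb₂
  rw [perspective_of_ne_zero hb.ne', perspective_of_ne_zero hb₁.ne',
    perspective_of_ne_zero hb₂.ne', ← EReal.coe_add, EReal.coe_le_coe_iff]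
  have hjensen := hf.2 (mem_Ici.2 (div_nonneg ha₁ hb₁.le)) (mem_Ici.2 (div_nonneg ha₂ hb₂.le))
    (div_nonneg hb₁.le hb.le) (div_nonneg hb₂.le hb.le) (by field_simp)
  have hmix : b₁ / (b₁ + b₂) * (a₁ / b₁) + b₂ / (b₁ + b₂) * (a₂ / b₂) = (a₁ + a₂) / (b₁ + b₂) := by
    field_simp
  simp only [smul_eq_mul, hmix] at hjensen
  calc (b₁ + b₂) * f ((a₁ + a₂) / (b₁ + b₂))
      ≤ (b₁ + b₂) * (b₁ / (b₁ + b₂) * f (a₁ / b₁) + b₂ / (b₁ + b₂) * f (a₂ / b₂)) := by gcongr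
    _ = b₁ * f (a₁ / b₁) + b₂ * f (a₂ / b₂) := by field_simp

lemma ConvexOn.perspective_sum_le (hf : ConvexOn ℝ (Ici 0) f) {ι : Type*} (s : Finset ι)
    {a b : ι → ℝ} (ha : ∀ i ∈ s, 0 ≤ a i) (hb : ∀ i ∈ s, 0 ≤ b i) :
    perspective f (∑ i ∈ s, a i) (∑ i ∈ s, b i) ≤ ∑ i ∈ s, perspective f (a i) (b i) := by
  induction s using Finset.cons_induction with
  | empty => simp [perspective]
  | cons j s hj ih =>
    have ha' : ∀ i ∈ s, 0 ≤ a i := fun i hi => ha i (mem_cons_of_mem hi)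
    have hb' : ∀ i ∈ s, 0 ≤ b i := fun i hi => hb i (mem_cons_of_mem hi)
    simp only [sum_cons]
    calc perspective f (a j + ∑ i ∈ s, a i) (b j + ∑ i ∈ s, b i)
        ≤ perspective f (a j) (b j) + perspective f (∑ i ∈ s, a i) (∑ i ∈ s, b i) :=
          hf.perspective_add_le (ha j (mem_cons_self j s)) (sum_nonneg ha')
            (hb j (mem_cons_self j s)) (sum_nonneg hb')
      _ ≤ perspective f (a j) (b j) + ∑ i ∈ s, perspective f (a i) (b i) := by
          gcongr
          exact ih ha' hb'

end Perspective

section Stochastic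

variable {X : Type*} [Fintype X]

lemma IsTransMat.row {M : X → X → ℝ} (hM : IsTransMat M) (x : X) : IsProb (M x) :=
  ⟨hM.1 x, hM.2 x⟩

lemma IsProb.const_isTransMat {μ : X → ℝ} (hμ : IsProb μ) : IsTransMat fun _ : X => μ :=
  ⟨fun _ => hμ.1, fun _ => hμ.2⟩

end Stochastic

section FDivergence

variable {X : Type*} [Fintype X] {f : ℝ → ℝ}

lemma DtfE_eq_sum_perspective (μ ν : X → ℝ) :
    DtfE f μ ν = ∑ x, perspective f (μ x) (ν x) := rfl

lemma DtfE_self (hf1 : f 1 = 0) (μ : X → ℝ) : DtfE f μ μ = 0 := by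
  simp [DtfE_eq_sum_perspective, perspective_self hf1]

lemma ConvexOn.DtfE_nonneg (hf : ConvexOn ℝ (Ici 0) f) (hf1 : f 1 = 0) {μ ν : X → ℝ}
    (hμ : IsProb μ) (hν : IsProb ν) : 0 ≤ DtfE f μ ν := by
  have h := hf.perspective_sum_le univ (fun x _ => hμ.1 x) (fun x _ => hν.1 x)
  rwa [hμ.2, hν.2, perspective_self hf1] at h

lemma ConvexOn.DtfE_vecMul_le (hf : ConvexOn ℝ (Ici 0) f) {μ ν : X → ℝ} (hμ : ∀ x, 0 ≤ μ x)
    (hν : ∀ x, 0 ≤ ν x) {P : X → X → ℝ} (hP : IsTransMat P) :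
    DtfE f (vecMul μ P) (vecMul ν P) ≤ DtfE f μ ν := by
  calc DtfE f (vecMul μ P) (vecMul ν P)
      ≤ ∑ y, ∑ x, perspective f (μ x * P x y) (ν x * P x y) :=
        sum_le_sum fun y _ => hf.perspective_sum_le univ
          (fun x _ => mul_nonneg (hμ x) (hP.1 x y)) (fun x _ => mul_nonneg (hν x) (hP.1 x y))
    _ = ∑ x, (∑ y, (P x y : EReal)) * perspective f (μ x) (ν x) := by
        rw [sum_comm]
        refine sum_congr rfl fun x _ => ?_
        rw [EReal.finset_sum_mul_of_nonneg _ (fun y _ => EReal.coe_nonneg.2 (hP.1 x y))]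
        refine sum_congr rfl fun y _ => ?_
        rw [mul_comm (μ x), mul_comm (ν x), perspective_mul_mul (hP.1 x y)]
    _ = DtfE f μ ν := by
        simp [← EReal.coe_finset_sum, hP.2, DtfE_eq_sum_perspective]

lemma DfE_eq_sum_mul_DtfE {π : X → ℝ} (hπ : ∀ x, 0 ≤ π x) (M L : X → X → ℝ) :
    DfE π f M L = ∑ x, (π x : EReal) * DtfE f (M x) (L x) := by
  refine sum_congr rfl fun x _ => ?_
  rw [DtfE_eq_sum_perspective, EReal.coe_mul_finset_sum _ (hπ x)]
  refine sum_congr rfl fun y _ => ?_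
  unfold perspective
  split_ifs <;> simp [EReal.coe_mul, mul_assoc]

lemma DfE_const {π : X → ℝ} (hπ : ∀ x, 0 ≤ π x) (hπ1 : ∑ x, π x = 1) (μ ν : X → ℝ) :
    DfE π f (fun _ => μ) (fun _ => ν) = DtfE f μ ν := by
  rw [DfE_eq_sum_mul_DtfE hπ, ← EReal.finset_sum_mul_of_nonneg _
    (fun x _ => EReal.coe_nonneg.2 (hπ x)), ← EReal.coe_finset_sum, hπ1, EReal.coe_one, one_mul]

end FDivergence

section ContractionRatios

variable {X : Type*} [Fintype X]

/- `etaF π f P`, `etaR π α P`, `etaTF f P` and `etaTR α P` are by definition the suprema of these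
sets for `D = DfE π f`, `RalphaE π α`, `DtfE f` and `RtalphaE α` respectively. -/

def matContractionRatios (D : (X → X → ℝ) → (X → X → ℝ) → EReal) (P : X → X → ℝ) :
    Set EReal :=
  {r | ∃ M L : X → X → ℝ, IsTransMat M ∧ IsTransMat L ∧ M ≠ L ∧ 0 < D M L ∧ D M L ≠ ⊤ ∧
    r = D (matMul M P) (matMul L P) * ((((D M L).toReal)⁻¹ : ℝ) : EReal)}

def vecContractionRatios (D : (X → ℝ) → (X → ℝ) → EReal) (P : X → X → ℝ) : Set EReal :=
  {r | ∃ μ ν : X → ℝ, IsProb μ ∧ IsProb ν ∧ μ ≠ ν ∧ 0 < D μ ν ∧ D μ ν ≠ ⊤ ∧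
    r = D (vecMul μ P) (vecMul ν P) * ((((D μ ν).toReal)⁻¹ : ℝ) : EReal)}

variable {D : (X → X → ℝ) → (X → X → ℝ) → EReal} {Dt : (X → ℝ) → (X → ℝ) → EReal}
  {P : X → X → ℝ}

lemma sSup_vecContractionRatios_le_of_const
    (hconst : ∀ μ ν, D (fun _ => μ) (fun _ => ν) = Dt μ ν) :
    sSup (vecContractionRatios Dt P) ≤ sSup (matContractionRatios D P) := by
  refine sSup_le_sSup ?_
  rintro _ ⟨μ, ν, hμ, hν, hne, hpos, hfin, rfl⟩
  obtain ⟨x, -⟩ := Function.ne_iff.1 hne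
  refine ⟨fun _ => μ, fun _ => ν, hμ.const_isTransMat, hν.const_isTransMat,
    fun h => hne (congrFun h x), by rwa [hconst], by rwa [hconst], ?_⟩
  change _ = D (fun _ => vecMul μ P) (fun _ => vecMul ν P) * _
  rw [hconst, hconst]

lemma le_sSup_vecContractionRatios_mul {μ ν : X → ℝ} (hμ : IsProb μ) (hν : IsProb ν)
    (hnn : 0 ≤ Dt μ ν) (hfin : Dt μ ν ≠ ⊤) (hself : Dt μ μ = 0)
    (hdpi : Dt (vecMul μ P) (vecMul ν P) ≤ Dt μ ν) :
    Dt (vecMul μ P) (vecMul ν P) ≤ sSup (vecContractionRatios Dt P) * Dt μ ν := by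
  rcases hnn.eq_or_lt with h0 | hpos
  · rw [← h0, mul_zero]
    exact h0 ▸ hdpi
  obtain ⟨r, hr⟩ : ∃ r : ℝ, Dt μ ν = r :=
    ⟨_, (EReal.coe_toReal hfin (EReal.bot_lt_zero.trans hpos).ne').symm⟩
  have hr0 : 0 < r := by exact_mod_cast hr ▸ hpos
  have hne : μ ≠ ν := by
    rintro rfl
    exact hpos.ne' hself
  have hmem : Dt (vecMul μ P) (vecMul ν P) * ((r⁻¹ : ℝ) : EReal) ∈ vecContractionRatios Dt P :=
    ⟨μ, ν, hμ, hν, hne, hpos, hfin, by rw [hr, EReal.toReal_coe]⟩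
  calc Dt (vecMul μ P) (vecMul ν P)
      = Dt (vecMul μ P) (vecMul ν P) * ((r⁻¹ : ℝ) : EReal) * r := by
        rw [mul_assoc, ← EReal.coe_mul, inv_mul_cancel₀ hr0.ne', EReal.coe_one, mul_one]
    _ ≤ sSup (vecContractionRatios Dt P) * Dt μ ν := by
        rw [hr]
        exact mul_le_mul_of_nonneg_right (le_sSup hmem) (EReal.coe_nonneg.2 hr0.le)

lemma sSup_matContractionRatios_le {π : X → ℝ} (hπ : ∀ x, 0 < π x)
    (hD : ∀ M L, D M L = ∑ x, (π x : EReal) * Dt (M x) (L x))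
    (hnn : ∀ μ ν, IsProb μ → IsProb ν → 0 ≤ Dt μ ν) (hself : ∀ μ, Dt μ μ = 0)
    (hdpi : ∀ μ ν, IsProb μ → IsProb ν → Dt (vecMul μ P) (vecMul ν P) ≤ Dt μ ν) :
    sSup (matContractionRatios D P) ≤ sSup (vecContractionRatios Dt P) := by
  refine sSup_le ?_
  rintro _ ⟨M, L, hM, hL, -, hpos, hfin, rfl⟩
  set η := sSup (vecContractionRatios Dt P)
  have hrow_nn (x : X) : 0 ≤ Dt (M x) (L x) := hnn _ _ (hM.row x) (hL.row x)
  have hterm_nn (x : X) : 0 ≤ (π x : EReal) * Dt (M x) (L x) :=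
    mul_nonneg (EReal.coe_nonneg.2 (hπ x).le) (hrow_nn x)
  have hrow_fin (x : X) : Dt (M x) (L x) ≠ ⊤ := by
    intro hx
    apply hfin
    rw [hD, eq_top_iff, ← EReal.coe_mul_top_of_pos (hπ x), ← hx]
    exact single_le_sum (fun i _ => hterm_nn i) (mem_univ x)
  obtain ⟨R, hR⟩ : ∃ R : ℝ, D M L = R :=
    ⟨_, (EReal.coe_toReal hfin (EReal.bot_lt_zero.trans hpos).ne').symm⟩
  have hR0 : 0 < R := by exact_mod_cast hR ▸ hpos
  have hcontract : D (matMul M P) (matMul L P) ≤ η * R := by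
    calc D (matMul M P) (matMul L P)
        = ∑ x, (π x : EReal) * Dt (vecMul (M x) P) (vecMul (L x) P) := hD _ _
      _ ≤ ∑ x, (π x : EReal) * (η * Dt (M x) (L x)) := by
          refine sum_le_sum fun x _ => mul_le_mul_of_nonneg_left ?_ (EReal.coe_nonneg.2 (hπ x).le)
          exact le_sSup_vecContractionRatios_mul (hM.row x) (hL.row x) (hrow_nn x) (hrow_fin x)
            (hself _) (hdpi _ _ (hM.row x) (hL.row x))
      _ = η * R := by
          rw [← hR, hD, EReal.mul_finset_sum_of_nonneg _ _ fun x _ => hterm_nn x]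
          simp only [mul_left_comm]
  calc D (matMul M P) (matMul L P) * ((((D M L).toReal)⁻¹ : ℝ) : EReal)
      ≤ η * R * ((R⁻¹ : ℝ) : EReal) := by
        rw [hR, EReal.toReal_coe]
        exact mul_le_mul_of_nonneg_right hcontract (EReal.coe_nonneg.2 (inv_nonneg.2 hR0.le))
    _ = η := by rw [mul_assoc, ← EReal.coe_mul, mul_inv_cancel₀ hR0.ne', EReal.coe_one, mul_one]

end ContractionRatios

section Renyi

variable {X : Type*} [Fintype X] {π : X → ℝ} {α : ℝ}

lemma DalphaSumE_const (hπ : ∀ x, 0 < π x) (hπ1 : ∑ x, π x = 1) (μ ν : X → ℝ) :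
    DalphaSumE π α (fun _ => μ) (fun _ => ν) = DtalphaSumE α μ ν := by
  have hsummand (x y : X) :
      (if ν y = 0 then (if μ y = 0 then 0 else if 1 < α then ⊤ else 0)
        else ENNReal.ofReal (π x * ν y * (μ y / ν y) ^ α)) =
      ENNReal.ofReal (π x) * (if ν y = 0 then (if μ y = 0 then 0 else if 1 < α then ⊤ else 0)
        else ENNReal.ofReal (ν y * (μ y / ν y) ^ α)) := by
    split_ifs <;> simp [hπ x, mul_assoc, ENNReal.ofReal_mul (hπ x).le]
  simp only [DalphaSumE, DtalphaSumE, hsummand]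
  rw [sum_comm]
  simp only [← sum_mul, ← ENNReal.ofReal_sum_of_nonneg fun x _ => (hπ x).le, hπ1,
    ENNReal.ofReal_one, one_mul]

lemma RalphaE_const (hπ : ∀ x, 0 < π x) (hπ1 : ∑ x, π x = 1) (μ ν : X → ℝ) :
    RalphaE π α (fun _ => μ) (fun _ => ν) = RtalphaE α μ ν := by
  unfold RalphaE RtalphaE DalphaE DtalphaE
  rw [DalphaSumE_const hπ hπ1]

end Renyi

theorem stmt12_general {X : Type*} [Fintype X]
    (π : X → ℝ) (hπ : ∀ x, 0 < π x) (hπ1 : ∑ x, π x = 1)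
    (f : ℝ → ℝ) (hf : ConvexOn ℝ (Set.Ici 0) f) (hf1 : f 1 = 0)
    (P : X → X → ℝ) (hP : IsTransMat P) :
    etaF π f P = etaTF f P ∧
    ∀ α ∈ Set.Ioo (0 : ℝ) 1 ∪ Set.Ioi 1, etaTR α P ≤ etaR π α P := by
  refine ⟨le_antisymm ?_ ?_, fun α _ => ?_⟩
  · exact sSup_matContractionRatios_le hπ (DfE_eq_sum_mul_DtfE fun x => (hπ x).le)
      (fun _ _ hμ hν => hf.DtfE_nonneg hf1 hμ hν) (DtfE_self hf1)
      (fun _ _ hμ hν => hf.DtfE_vecMul_le hμ.1 hν.1 hP)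
  · exact sSup_vecContractionRatios_le_of_const (DfE_const (fun x => (hπ x).le) hπ1)
  · exact sSup_vecContractionRatios_le_of_const (RalphaE_const hπ hπ1)

/-- The ergodicity coefficient of transition matrices agrees with the classical one on
probability measures, and the Rényi ergodicity coefficients are comparable. -/
theorem stmt12 {X : Type*} [Fintype X] [Nonempty X]
    (π : X → ℝ) (hπ : ∀ x, 0 < π x) (hπ1 : ∑ x, π x = 1)
    (f : ℝ → ℝ) (hf : ConvexOn ℝ (Set.Ici 0) f) (hf1 : f 1 = 0)
    (P : X → X → ℝ) (hP : IsTransMat P) :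
    etaF π f P = etaTF f P ∧
    ∀ α ∈ Set.Ioo (0 : ℝ) 1 ∪ Set.Ioi 1, etaTR α P ≤ etaR π α P :=
  stmt12_general π hπ hπ1 f hf hf1 P hP
end

section
/- (Chernoff bound for the best achievable Bayesian error) Let P₀ and P₁ be transition matrices on 𝒳 with P₀(x,y) > 0 and P₁(x,y) > 0 for all x,y, with edge measures Q_i(x,y) := π(x)P_i(x,y) on 𝒳 × 𝒳, and let π₀ ∈ (0,1), π₁ := 1 − π₀ be prior probabilities. For n ≥ 1, the best achievable Bayesian error is P_e*(n) := inf over subsets A ⊆ (𝒳×𝒳)^n of { π₀ Q₀^{⊗n}(A) + π₁ Q₁^{⊗n}(Aᶜ) }, where Q_i^{⊗n} is the n-fold product measure. Then lim_{n→∞} −(1/n) ln P_e*(n) = C(P₀,P₁), where the Chernoff information is C(P₀,P₁) := max_{α ∈ [0,1]} ( −ln ∑_{x,y} π(x) P₀(x,y)^α P₁(x,y)^{1−α} ). -/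
/-!
The edge measures make the observations i.i.d. with law `Q₀` or `Q₁` on `X × X`, and the optimal
test decides word by word, so `P_e*(n) = ∑_w min (π₀ Q₀ⁿ(w)) (π₁ Q₁ⁿ(w))`. Since
`min a b ≤ a ^ α * b ^ (1 - α)`, this is at most `ρ(α) ^ n` with `ρ(α) = ∑ Q₀ ^ α Q₁ ^ (1 - α)`.
Conversely `ρ ≤ 1 = ρ 0 = ρ 1` on `[0, 1]`, so `ρ` has an interior minimizer `α`, where `ρ'(α) = 0`
says that the log-likelihood ratio is centred under the tilted law `Q₀ ^ α Q₁ ^ (1 - α) / ρ(α)`.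
Both `Q₀ⁿ(w)` and `Q₁ⁿ(w)` are `ρ(α) ^ n` times the tilted weight of `w` times `e ^ (± O(nδ))`
as soon as the summed log-likelihood ratio of `w` is at most `nδ` in absolute value, an event of
tilted probability tending to one by Chebyshev; hence `P_e*(n) ≥ c ρ(α) ^ n e ^ (-nδ)`.
-/

open Finset Filter

open scoped Classical in
/-- The n-fold product probability of a set `A ⊆ (X × X)ⁿ` under the finitely supported
probability mass `Q` on `X × X`. -/
noncomputable def prodProb {X : Type*} [Fintype X] (Q : X × X → ℝ) {n : ℕ}
    (A : Set (Fin n → X × X)) : ℝ :=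
  ∑ z : Fin n → X × X, if z ∈ A then ∏ i, Q (z i) else 0

open Set Topology

section BayesRisk

variable {W : Type*} [Fintype W]

open scoped Classical in
theorem isLeast_sum_ite_sum_min (a b : W → ℝ) :
    IsLeast {r | ∃ A : Set W, r = ∑ w, if w ∈ A then a w else b w} (∑ w, min (a w) (b w)) := by
  refine ⟨⟨{w | a w ≤ b w}, Finset.sum_congr rfl fun w _ => by simp [min_def]⟩, ?_⟩
  rintro r ⟨A, rfl⟩
  exact Finset.sum_le_sum fun w _ => by split_ifs <;> simp

theorem sInf_bayesRisk_eq_sum_min {X : Type*} [Fintype X] (Q₀ Q₁ : X × X → ℝ) (π₀ : ℝ) (n : ℕ) :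
    sInf {r : ℝ | ∃ A : Set (Fin n → X × X),
        r = π₀ * prodProb Q₀ A + (1 - π₀) * prodProb Q₁ Aᶜ} =
      ∑ w : Fin n → X × X, min (π₀ * ∏ i, Q₀ (w i)) ((1 - π₀) * ∏ i, Q₁ (w i)) := by
  classical
  have hrisk : ∀ A : Set (Fin n → X × X),
      π₀ * prodProb Q₀ A + (1 - π₀) * prodProb Q₁ Aᶜ =
        ∑ w, if w ∈ A then π₀ * ∏ i, Q₀ (w i) else (1 - π₀) * ∏ i, Q₁ (w i) := by
    intro A
    simp only [prodProb, Finset.mul_sum, ← Finset.sum_add_distrib]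
    refine Finset.sum_congr rfl fun w _ => ?_
    by_cases hw : w ∈ A <;> simp [hw]
  simp_rw [hrisk]
  exact (isLeast_sum_ite_sum_min _ _).csInf_eq

end BayesRisk

section

-- `Real` stays closed outside this section: its notation `π` would capture the variable `π` of
-- the final theorem.
open Real

theorem min_le_rpow_mul_rpow {a b α : ℝ} (ha : 0 ≤ a) (hb : 0 ≤ b) (hα : α ∈ Icc (0 : ℝ) 1) :
    min a b ≤ a ^ α * b ^ (1 - α) := by
  have hm : 0 ≤ min a b := le_min ha hb
  calc min a b = min a b ^ α * min a b ^ (1 - α) := by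
        rw [← rpow_add' hm (by norm_num), add_sub_cancel, rpow_one]
    _ ≤ a ^ α * b ^ (1 - α) :=
        mul_le_mul (rpow_le_rpow hm (min_le_left a b) hα.1)
          (rpow_le_rpow hm (min_le_right a b) (by linarith [hα.2]))
          (rpow_nonneg hm _) (rpow_nonneg ha _)

theorem sum_sub_sum_mul_sq_div_sq_le_sum_filter {W : Type*} [Fintype W] {μ : W → ℝ}
    (hμ : ∀ w, 0 ≤ μ w) (g : W → ℝ) {t : ℝ} (ht : 0 < t) :
    ∑ w, μ w - (∑ w, μ w * g w ^ 2) / t ^ 2 ≤ ∑ w with |g w| ≤ t, μ w := by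
  have htail : ∑ w with ¬ |g w| ≤ t, μ w ≤ (∑ w, μ w * g w ^ 2) / t ^ 2 := by
    rw [Finset.sum_div]
    calc ∑ w with ¬ |g w| ≤ t, μ w ≤ ∑ w with ¬ |g w| ≤ t, μ w * g w ^ 2 / t ^ 2 := by
          refine Finset.sum_le_sum fun w hw => ?_
          have hgt : t ^ 2 ≤ g w ^ 2 := by
            rw [← sq_abs (g w)]
            exact pow_le_pow_left₀ ht.le (not_le.mp (Finset.mem_filter.mp hw).2).le 2
          rw [le_div_iff₀ (by positivity)]
          exact mul_le_mul_of_nonneg_left hgt (hμ w)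
      _ ≤ ∑ w, μ w * g w ^ 2 / t ^ 2 :=
          Finset.sum_le_sum_of_subset_of_nonneg (Finset.filter_subset _ _)
            fun w _ _ => by have := hμ w; positivity
  linarith [Finset.sum_filter_add_sum_filter_not Finset.univ (fun w => |g w| ≤ t) μ]

section IIDSums

variable {Z : Type*} [Fintype Z]

theorem sum_prod_mul_mul_eq_ite {p ℓ : Z → ℝ} (hp : ∑ z, p z = 1) (hpℓ : ∑ z, p z * ℓ z = 0)
    {n : ℕ} (i j : Fin n) :
    ∑ w : Fin n → Z, (∏ k, p (w k)) * (ℓ (w i) * ℓ (w j)) =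
      if i = j then ∑ z, p z * ℓ z ^ 2 else 0 := by
  classical
  -- each product `ℓ (w i) * ℓ (w j)` is a product over coordinates, so the sum factorizes
  set F : Fin n → Z → ℝ := fun k z => p z * ((if k = i then ℓ z else 1) * (if k = j then ℓ z else 1))
  have hfactor : ∑ w : Fin n → Z, (∏ k, p (w k)) * (ℓ (w i) * ℓ (w j)) = ∏ k, ∑ z, F k z := by
    rw [Fintype.prod_sum]
    refine Finset.sum_congr rfl fun w _ => ?_
    simp only [F, Finset.prod_mul_distrib, Finset.prod_ite_eq', Finset.mem_univ, if_true]
  rw [hfactor]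
  split_ifs with hij
  · subst hij
    rw [Finset.prod_eq_single i (fun k _ hk => by simp [F, hk, hp]) (by simp)]
    exact Finset.sum_congr rfl fun z _ => by simp [F, sq]
  · exact Finset.prod_eq_zero (Finset.mem_univ i) (by simpa [F, hij] using hpℓ)

theorem sum_prod_mul_sum_sq {p ℓ : Z → ℝ} (hp : ∑ z, p z = 1) (hpℓ : ∑ z, p z * ℓ z = 0)
    (n : ℕ) :
    ∑ w : Fin n → Z, (∏ i, p (w i)) * (∑ i, ℓ (w i)) ^ 2 = n * ∑ z, p z * ℓ z ^ 2 := by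
  simp_rw [sq (∑ i, _), Finset.sum_mul_sum, Finset.mul_sum]
  rw [Finset.sum_comm]
  simp_rw [Finset.sum_comm (γ := Fin n → Z), sum_prod_mul_mul_eq_ite hp hpℓ, Finset.sum_ite_eq,
    Finset.mem_univ, if_true, Finset.sum_const, Finset.card_univ, Fintype.card_fin, nsmul_eq_mul]
  exact Finset.mul_sum _ _ _

end IIDSums

theorem exists_mem_Ioo_isMinOn_of_le {f : ℝ → ℝ} {a b : ℝ} (hab : a < b)
    (hf : ContinuousOn f (Icc a b)) (hfab : f b = f a) (hle : ∀ x ∈ Icc a b, f x ≤ f a) :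
    ∃ c ∈ Ioo a b, IsMinOn f (Icc a b) c := by
  obtain ⟨m, hm, hmin⟩ := isCompact_Icc.exists_isMinOn (nonempty_Icc.2 hab.le) hf
  by_cases hmI : m ∈ Ioo a b
  · exact ⟨m, hmI, hmin⟩
  -- a minimum at an endpoint has value `f a`, which is also the maximum, so `f` is constant
  have hfm : f m = f a := by
    rcases eq_endpoints_or_mem_Ioo_of_mem_Icc hm with rfl | rfl | h
    · rfl
    · exact hfab
    · exact absurd h hmI
  have hmid : (a + b) / 2 ∈ Icc a b := ⟨by linarith, by linarith⟩
  exact ⟨(a + b) / 2, ⟨by linarith, by linarith⟩,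
    isMinOn_iff.2 fun x hx => by linarith [hle _ hmid, isMinOn_iff.1 hmin x hx]⟩

theorem rpow_mul_rpow_eq_mul_exp {a b : ℝ} (ha : 0 < a) (hb : 0 < b) (α : ℝ) :
    a ^ α * b ^ (1 - α) = b * exp (α * (log a - log b)) := by
  rw [rpow_def_of_pos ha, rpow_def_of_pos hb, ← exp_add]
  conv_rhs => rw [← exp_log hb]
  rw [← exp_add, log_exp]
  congr 1
  ring

theorem tendsto_neg_inv_mul_log_of_pow_bounds {u : ℕ → ℝ} {K : ℝ} (hK : 0 < K)
    (hup : ∀ᶠ n in atTop, u n ≤ K ^ n)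
    (hlow : ∀ δ > 0, ∃ c > 0, ∀ᶠ n in atTop, c * (K * exp (-δ)) ^ n ≤ u n) :
    Tendsto (fun n : ℕ => -(1 / n : ℝ) * log (u n)) atTop (𝓝 (-log K)) := by
  refine tendsto_order.2 ⟨fun a ha => ?_, fun b hb => ?_⟩
  · obtain ⟨c, hc, hc'⟩ := hlow 1 one_pos
    filter_upwards [hup, hc', eventually_gt_atTop 0] with n hup hlow hn
    have hn' : (0 : ℝ) < n := Nat.cast_pos.2 hn
    have hlog : log (u n) ≤ n * log K := by
      rw [← log_pow]
      exact log_le_log (lt_of_lt_of_le (by positivity) hlow) hup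
    have : -log K ≤ -(1 / n : ℝ) * log (u n) := by
      rw [neg_mul, neg_le_neg_iff, one_div_mul_eq_div, div_le_iff₀ hn']
      linarith
    linarith
  · set δ := (b + log K) / 2
    have hδ : 0 < δ := by simp only [δ]; linarith
    have hbδ : b = 2 * δ - log K := by simp only [δ]; ring
    obtain ⟨c, hc, hc'⟩ := hlow δ hδ
    filter_upwards [hc', (tendsto_const_div_atTop_nhds_zero_nat (-log c)).eventually
      (eventually_lt_nhds hδ), eventually_gt_atTop 0] with n hlow hsmall hn
    have hn' : (0 : ℝ) < n := Nat.cast_pos.2 hn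
    have hlog : log c + n * (log K - δ) ≤ log (u n) := by
      calc log c + n * (log K - δ) = log (c * (K * exp (-δ)) ^ n) := by
            rw [log_mul hc.ne' (by positivity), log_pow, log_mul hK.ne' (exp_pos _).ne', log_exp]
            ring
        _ ≤ log (u n) := log_le_log (by positivity) hlow
    have : -(1 / n : ℝ) * log (u n) ≤ -log c / n + (-log K + δ) := by
      calc -(1 / n : ℝ) * log (u n) ≤ -(1 / n : ℝ) * (log c + n * (log K - δ)) :=
            mul_le_mul_of_nonpos_left hlog (by simp only [one_div, neg_nonpos]; positivity)
        _ = -log c / n + (-log K + δ) := by field_simp; ring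
    linarith

section Chernoff

variable {Z : Type*} [Fintype Z] (q₀ q₁ : Z → ℝ)

noncomputable def chernoffCoeff (α : ℝ) : ℝ := ∑ z, q₀ z ^ α * q₁ z ^ (1 - α)

noncomputable def logLikelihoodRatio (z : Z) : ℝ := log (q₀ z) - log (q₁ z)

noncomputable def tilted (α : ℝ) (z : Z) : ℝ := q₀ z ^ α * q₁ z ^ (1 - α) / chernoffCoeff q₀ q₁ α

noncomputable def bayesError (π₀ : ℝ) (n : ℕ) : ℝ :=
  ∑ w : Fin n → Z, min (π₀ * ∏ i, q₀ (w i)) ((1 - π₀) * ∏ i, q₁ (w i))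

variable {q₀ q₁}

theorem chernoffCoeff_pos [Nonempty Z] (h₀ : ∀ z, 0 < q₀ z) (h₁ : ∀ z, 0 < q₁ z) (α : ℝ) :
    0 < chernoffCoeff q₀ q₁ α :=
  Finset.sum_pos (fun z _ => by have := h₀ z; have := h₁ z; positivity) Finset.univ_nonempty

theorem chernoffCoeff_le_one (h₀ : ∀ z, 0 ≤ q₀ z) (h₁ : ∀ z, 0 ≤ q₁ z) (s₀ : ∑ z, q₀ z = 1)
    (s₁ : ∑ z, q₁ z = 1) {α : ℝ} (hα : α ∈ Icc (0 : ℝ) 1) : chernoffCoeff q₀ q₁ α ≤ 1 :=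
  calc chernoffCoeff q₀ q₁ α ≤ ∑ z, (α * q₀ z + (1 - α) * q₁ z) :=
        Finset.sum_le_sum fun z _ => geom_mean_le_arith_mean2_weighted hα.1
          (by linarith [hα.2]) (h₀ z) (h₁ z) (by ring)
    _ = 1 := by rw [Finset.sum_add_distrib, ← Finset.mul_sum, ← Finset.mul_sum, s₀, s₁]; ring

theorem hasDerivAt_chernoffCoeff (h₀ : ∀ z, 0 < q₀ z) (h₁ : ∀ z, 0 < q₁ z) (α : ℝ) :
    HasDerivAt (chernoffCoeff q₀ q₁)
      (∑ z, q₀ z ^ α * q₁ z ^ (1 - α) * logLikelihoodRatio q₀ q₁ z) α := by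
  have hfun : chernoffCoeff q₀ q₁ =
      fun β => ∑ z, q₁ z * exp (β * logLikelihoodRatio q₀ q₁ z) :=
    funext fun β => Finset.sum_congr rfl fun z _ => rpow_mul_rpow_eq_mul_exp (h₀ z) (h₁ z) β
  rw [hfun]
  refine HasDerivAt.fun_sum fun z _ => ?_
  rw [rpow_mul_rpow_eq_mul_exp (h₀ z) (h₁ z)]
  exact (((hasDerivAt_id α).mul_const _).exp.const_mul (q₁ z)).congr_deriv
    (by simp only [id, logLikelihoodRatio]; ring)

theorem exists_mem_Ioo_isMinOn_chernoffCoeff (h₀ : ∀ z, 0 < q₀ z) (h₁ : ∀ z, 0 < q₁ z)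
    (s₀ : ∑ z, q₀ z = 1) (s₁ : ∑ z, q₁ z = 1) :
    ∃ α ∈ Ioo (0 : ℝ) 1, IsMinOn (chernoffCoeff q₀ q₁) (Icc 0 1) α := by
  refine exists_mem_Ioo_isMinOn_of_le one_pos
    (fun α _ => (hasDerivAt_chernoffCoeff h₀ h₁ α).continuousAt.continuousWithinAt)
    ?_ fun α hα => ?_
  · simp [chernoffCoeff, s₀, s₁]
  · simpa [chernoffCoeff, s₁] using
      chernoffCoeff_le_one (fun z => (h₀ z).le) (fun z => (h₁ z).le) s₀ s₁ hα

theorem bayesError_le_chernoffCoeff_pow (h₀ : ∀ z, 0 ≤ q₀ z) (h₁ : ∀ z, 0 ≤ q₁ z) {π₀ : ℝ}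
    (hπ₀ : π₀ ∈ Icc (0 : ℝ) 1) {α : ℝ} (hα : α ∈ Icc (0 : ℝ) 1) (n : ℕ) :
    bayesError q₀ q₁ π₀ n ≤ chernoffCoeff q₀ q₁ α ^ n := by
  rw [chernoffCoeff, Fintype.sum_pow]
  refine Finset.sum_le_sum fun w _ => ?_
  have hA : 0 ≤ ∏ i, q₀ (w i) := Finset.prod_nonneg fun i _ => h₀ _
  have hB : 0 ≤ ∏ i, q₁ (w i) := Finset.prod_nonneg fun i _ => h₁ _
  calc min (π₀ * ∏ i, q₀ (w i)) ((1 - π₀) * ∏ i, q₁ (w i))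
      ≤ min (∏ i, q₀ (w i)) (∏ i, q₁ (w i)) :=
        min_le_min (mul_le_of_le_one_left hA hπ₀.2)
          (mul_le_of_le_one_left hB (by linarith [hπ₀.1]))
    _ ≤ (∏ i, q₀ (w i)) ^ α * (∏ i, q₁ (w i)) ^ (1 - α) := min_le_rpow_mul_rpow hA hB hα
    _ = ∏ i, q₀ (w i) ^ α * q₁ (w i) ^ (1 - α) := by
        rw [← finsetProd_rpow _ _ (fun i _ => h₀ _), ← finsetProd_rpow _ _ (fun i _ => h₁ _),
          Finset.prod_mul_distrib]

theorem sum_tilted_mul_logLikelihoodRatio_eq_zero (h₀ : ∀ z, 0 < q₀ z) (h₁ : ∀ z, 0 < q₁ z)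
    {α : ℝ} (hα : α ∈ Ioo (0 : ℝ) 1) (hmin : IsMinOn (chernoffCoeff q₀ q₁) (Icc 0 1) α) :
    ∑ z, tilted q₀ q₁ α z * logLikelihoodRatio q₀ q₁ z = 0 := by
  have hderiv := (hmin.isLocalMin (Icc_mem_nhds hα.1 hα.2)).hasDerivAt_eq_zero
    (hasDerivAt_chernoffCoeff h₀ h₁ α)
  simp_rw [tilted, div_mul_eq_mul_div, ← Finset.sum_div, hderiv, zero_div]

section Tilted

variable [Nonempty Z] (h₀ : ∀ z, 0 < q₀ z) (h₁ : ∀ z, 0 < q₁ z)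
include h₀ h₁

theorem tilted_pos (α : ℝ) (z : Z) : 0 < tilted q₀ q₁ α z := by
  have := h₀ z; have := h₁ z; have := chernoffCoeff_pos h₀ h₁ α
  unfold tilted; positivity

theorem sum_tilted (α : ℝ) : ∑ z, tilted q₀ q₁ α z = 1 := by
  simp_rw [tilted, ← Finset.sum_div]
  exact div_self (chernoffCoeff_pos h₀ h₁ α).ne'

theorem chernoffCoeff_mul_tilted (α : ℝ) (z : Z) :
    chernoffCoeff q₀ q₁ α * tilted q₀ q₁ α z =
      q₁ z * exp (α * logLikelihoodRatio q₀ q₁ z) := by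
  rw [tilted, mul_div_cancel₀ _ (chernoffCoeff_pos h₀ h₁ α).ne']
  exact rpow_mul_rpow_eq_mul_exp (h₀ z) (h₁ z) α

theorem prod_left_eq_pow_mul_prod_tilted {n : ℕ} (α : ℝ) (w : Fin n → Z) :
    ∏ i, q₀ (w i) = chernoffCoeff q₀ q₁ α ^ n * (∏ i, tilted q₀ q₁ α (w i)) *
      exp ((1 - α) * ∑ i, logLikelihoodRatio q₀ q₁ (w i)) := by
  have hz : ∀ z, q₀ z = chernoffCoeff q₀ q₁ α * tilted q₀ q₁ α z *
      exp ((1 - α) * logLikelihoodRatio q₀ q₁ z) := fun z => by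
    rw [chernoffCoeff_mul_tilted h₀ h₁, mul_assoc, ← exp_add, logLikelihoodRatio]
    nth_rw 1 [← exp_log (h₀ z), ← exp_log (h₁ z)]
    rw [← exp_add]
    ring_nf
  simp_rw [hz, Finset.prod_mul_distrib, Finset.prod_const, Finset.card_univ, Fintype.card_fin,
    ← exp_sum, Finset.mul_sum]

theorem prod_right_eq_pow_mul_prod_tilted {n : ℕ} (α : ℝ) (w : Fin n → Z) :
    ∏ i, q₁ (w i) = chernoffCoeff q₀ q₁ α ^ n * (∏ i, tilted q₀ q₁ α (w i)) *
      exp (-(α * ∑ i, logLikelihoodRatio q₀ q₁ (w i))) := by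
  have hz : ∀ z, q₁ z = chernoffCoeff q₀ q₁ α * tilted q₀ q₁ α z *
      exp (-(α * logLikelihoodRatio q₀ q₁ z)) := fun z => by
    rw [chernoffCoeff_mul_tilted h₀ h₁, mul_assoc, ← exp_add, add_neg_cancel, exp_zero, mul_one]
  simp_rw [hz, Finset.prod_mul_distrib, Finset.prod_const, Finset.card_univ, Fintype.card_fin,
    ← exp_sum, Finset.mul_sum, Finset.sum_neg_distrib]

theorem min_mul_exp_mul_prod_tilted_le {α : ℝ} (hα : α ∈ Icc (0 : ℝ) 1) {π₀ : ℝ}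
    (hπ₀ : π₀ ∈ Icc (0 : ℝ) 1) {n : ℕ} {w : Fin n → Z} {t : ℝ}
    (hw : |∑ i, logLikelihoodRatio q₀ q₁ (w i)| ≤ t) :
    min π₀ (1 - π₀) * exp (-t) * (chernoffCoeff q₀ q₁ α ^ n * ∏ i, tilted q₀ q₁ α (w i)) ≤
      min (π₀ * ∏ i, q₀ (w i)) ((1 - π₀) * ∏ i, q₁ (w i)) := by
  rw [prod_left_eq_pow_mul_prod_tilted h₀ h₁ α, prod_right_eq_pow_mul_prod_tilted h₀ h₁ α]
  set S := ∑ i, logLikelihoodRatio q₀ q₁ (w i)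
  set M := chernoffCoeff q₀ q₁ α ^ n * ∏ i, tilted q₀ q₁ α (w i)
  have hM : 0 ≤ M := by
    have := chernoffCoeff_pos h₀ h₁ α
    have := Finset.prod_nonneg fun i (_ : i ∈ Finset.univ) => (tilted_pos h₀ h₁ α (w i)).le
    positivity
  obtain ⟨hlo, hhi⟩ := abs_le.1 hw
  have ht : 0 ≤ t := (abs_nonneg _).trans hw
  obtain ⟨hα₀, hα₁⟩ := hα
  apply le_min
  · have hexp : -t ≤ (1 - α) * S := by
      nlinarith [mul_nonneg (sub_nonneg.2 hα₁) (neg_le_iff_add_nonneg.1 hlo), mul_nonneg hα₀ ht]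
    calc min π₀ (1 - π₀) * exp (-t) * M ≤ π₀ * exp ((1 - α) * S) * M :=
          mul_le_mul_of_nonneg_right
            (mul_le_mul (min_le_left _ _) (exp_le_exp.2 hexp) (exp_pos _).le hπ₀.1) hM
      _ = π₀ * (M * exp ((1 - α) * S)) := by ring
  · have hexp : -t ≤ -(α * S) := by
      nlinarith [mul_nonneg hα₀ (sub_nonneg.2 hhi), mul_nonneg (sub_nonneg.2 hα₁) ht]
    calc min π₀ (1 - π₀) * exp (-t) * M ≤ (1 - π₀) * exp (-(α * S)) * M :=
          mul_le_mul_of_nonneg_right (mul_le_mul (min_le_right _ _) (exp_le_exp.2 hexp)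
            (exp_pos _).le (sub_nonneg.2 hπ₀.2)) hM
      _ = (1 - π₀) * (M * exp (-(α * S))) := by ring

theorem mul_pow_le_bayesError {α : ℝ} (hα : α ∈ Icc (0 : ℝ) 1)
    (hmean : ∑ z, tilted q₀ q₁ α z * logLikelihoodRatio q₀ q₁ z = 0) {π₀ : ℝ}
    (hπ₀ : π₀ ∈ Icc (0 : ℝ) 1) {δ : ℝ} (hδ : 0 < δ) {n : ℕ} (hn : 0 < n) :
    min π₀ (1 - π₀) *
        (1 - (∑ z, tilted q₀ q₁ α z * logLikelihoodRatio q₀ q₁ z ^ 2) / (n * δ ^ 2)) *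
        (chernoffCoeff q₀ q₁ α * exp (-δ)) ^ n ≤
      bayesError q₀ q₁ π₀ n := by
  set V := ∑ z, tilted q₀ q₁ α z * logLikelihoodRatio q₀ q₁ z ^ 2
  set S : (Fin n → Z) → ℝ := fun w => ∑ i, logLikelihoodRatio q₀ q₁ (w i)
  set μ : (Fin n → Z) → ℝ := fun w => ∏ i, tilted q₀ q₁ α (w i)
  have hn' : (0 : ℝ) < n := Nat.cast_pos.2 hn
  have hμ : ∀ w, 0 ≤ μ w := fun w => Finset.prod_nonneg fun i _ => (tilted_pos h₀ h₁ α _).le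
  -- Chebyshev's inequality for the sum of `n` i.i.d. centred log-likelihood ratios under `tilted`
  have hconc : 1 - V / (n * δ ^ 2) ≤ ∑ w with |S w| ≤ n * δ, μ w := by
    have := sum_sub_sum_mul_sq_div_sq_le_sum_filter hμ S (t := n * δ) (by positivity)
    rwa [← Fintype.sum_pow, sum_tilted h₀ h₁, one_pow,
      sum_prod_mul_sum_sq (sum_tilted h₀ h₁ α) hmean, mul_pow, sq (n : ℝ), mul_assoc,
      mul_div_mul_left _ _ hn'.ne'] at this
  have hc : 0 ≤ min π₀ (1 - π₀) := le_min hπ₀.1 (sub_nonneg.2 hπ₀.2)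
  have hK := chernoffCoeff_pos h₀ h₁ α
  calc min π₀ (1 - π₀) * (1 - V / (n * δ ^ 2)) * (chernoffCoeff q₀ q₁ α * exp (-δ)) ^ n
      ≤ min π₀ (1 - π₀) * (∑ w with |S w| ≤ n * δ, μ w) *
          (chernoffCoeff q₀ q₁ α * exp (-δ)) ^ n := by gcongr
    _ = ∑ w with |S w| ≤ n * δ,
          min π₀ (1 - π₀) * exp (-(n * δ)) * (chernoffCoeff q₀ q₁ α ^ n * μ w) := by
        rw [mul_pow, ← exp_nat_mul, Finset.mul_sum, Finset.sum_mul]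
        exact Finset.sum_congr rfl fun w _ => by ring_nf
    _ ≤ ∑ w with |S w| ≤ n * δ, min (π₀ * ∏ i, q₀ (w i)) ((1 - π₀) * ∏ i, q₁ (w i)) :=
        Finset.sum_le_sum fun w hw =>
          min_mul_exp_mul_prod_tilted_le h₀ h₁ hα hπ₀ (Finset.mem_filter.1 hw).2
    _ ≤ bayesError q₀ q₁ π₀ n :=
        Finset.sum_le_sum_of_subset_of_nonneg (Finset.filter_subset _ _) fun w _ _ =>
          le_min (mul_nonneg hπ₀.1 (Finset.prod_nonneg fun i _ => (h₀ _).le))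
            (mul_nonneg (by linarith [hπ₀.2]) (Finset.prod_nonneg fun i _ => (h₁ _).le))

theorem tendsto_neg_inv_mul_log_bayesError {π₀ : ℝ}
    (hπ₀ : π₀ ∈ Ioo (0 : ℝ) 1) {α : ℝ} (hα : α ∈ Icc (0 : ℝ) 1)
    (hmean : ∑ z, tilted q₀ q₁ α z * logLikelihoodRatio q₀ q₁ z = 0) :
    Tendsto (fun n : ℕ => -(1 / n : ℝ) * log (bayesError q₀ q₁ π₀ n)) atTop
      (𝓝 (-log (chernoffCoeff q₀ q₁ α))) := by
  have hK := chernoffCoeff_pos h₀ h₁ α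
  have hc : 0 < min π₀ (1 - π₀) := lt_min hπ₀.1 (sub_pos.2 hπ₀.2)
  refine tendsto_neg_inv_mul_log_of_pow_bounds hK (Eventually.of_forall fun n =>
    bayesError_le_chernoffCoeff_pow (fun z => (h₀ z).le) (fun z => (h₁ z).le)
      (Ioo_subset_Icc_self hπ₀) hα n) fun δ hδ => ⟨min π₀ (1 - π₀) / 2, half_pos hc, ?_⟩
  set V := ∑ z, tilted q₀ q₁ α z * logLikelihoodRatio q₀ q₁ z ^ 2
  filter_upwards [(tendsto_const_div_atTop_nhds_zero_nat (V / δ ^ 2)).eventually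
    (eventually_le_nhds one_half_pos), eventually_gt_atTop 0] with n hV hn
  rw [div_div, mul_comm] at hV
  calc min π₀ (1 - π₀) / 2 * (chernoffCoeff q₀ q₁ α * exp (-δ)) ^ n
      = min π₀ (1 - π₀) * (1 - 1 / 2) * (chernoffCoeff q₀ q₁ α * exp (-δ)) ^ n := by ring
    _ ≤ min π₀ (1 - π₀) * (1 - V / (n * δ ^ 2)) * (chernoffCoeff q₀ q₁ α * exp (-δ)) ^ n := by
        gcongr
    _ ≤ bayesError q₀ q₁ π₀ n :=
        mul_pow_le_bayesError h₀ h₁ hα hmean (Ioo_subset_Icc_self hπ₀) hδ hn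

theorem sSup_neg_log_chernoffCoeff {α : ℝ}
    (hα : α ∈ Icc (0 : ℝ) 1) (hmin : IsMinOn (chernoffCoeff q₀ q₁) (Icc 0 1) α) :
    sSup {c : ℝ | ∃ β ∈ Icc (0 : ℝ) 1, c = -log (chernoffCoeff q₀ q₁ β)} =
      -log (chernoffCoeff q₀ q₁ α) := by
  refine IsGreatest.csSup_eq ⟨⟨α, hα, rfl⟩, ?_⟩
  rintro c ⟨β, hβ, rfl⟩
  exact neg_le_neg (log_le_log (chernoffCoeff_pos h₀ h₁ α) (isMinOn_iff.1 hmin β hβ))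

end Tilted

end Chernoff

end

section EdgeMeasure

variable {X : Type*} [Fintype X] {π : X → ℝ}

theorem sum_edgeMeasure_eq_one (hπ1 : ∑ x, π x = 1) {P : X → X → ℝ} (hP : IsTransMat P) :
    ∑ z : X × X, π z.1 * P z.1 z.2 = 1 := by
  simp_rw [Fintype.sum_prod_type, ← Finset.mul_sum, hP.2, mul_one, hπ1]

theorem chernoffCoeff_edgeMeasure (hπ : ∀ x, 0 ≤ π x) {P₀ P₁ : X → X → ℝ}
    (hP₀ : ∀ x y, 0 ≤ P₀ x y) (hP₁ : ∀ x y, 0 ≤ P₁ x y) (α : ℝ) :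
    chernoffCoeff (fun z : X × X => π z.1 * P₀ z.1 z.2) (fun z => π z.1 * P₁ z.1 z.2) α =
      ∑ x, ∑ y, π x * P₀ x y ^ α * P₁ x y ^ (1 - α) := by
  rw [chernoffCoeff, Fintype.sum_prod_type]
  refine Finset.sum_congr rfl fun x _ => Finset.sum_congr rfl fun y _ => ?_
  rw [Real.mul_rpow (hπ x) (hP₀ x y), Real.mul_rpow (hπ x) (hP₁ x y)]
  calc π x ^ α * P₀ x y ^ α * (π x ^ (1 - α) * P₁ x y ^ (1 - α))
      = π x ^ (α + (1 - α)) * P₀ x y ^ α * P₁ x y ^ (1 - α) := by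
        rw [Real.rpow_add' (hπ x) (by norm_num)]; ring
    _ = π x * P₀ x y ^ α * P₁ x y ^ (1 - α) := by rw [add_sub_cancel, Real.rpow_one]

end EdgeMeasure

/-- Chernoff bound for the best achievable Bayesian error of binary hypothesis testing
between two Markov chains. -/
theorem stmt17 {X : Type*} [Fintype X] [Nonempty X]
    (π : X → ℝ) (hπ : ∀ x, 0 < π x) (hπ1 : ∑ x, π x = 1)
    (P₀ P₁ : X → X → ℝ) (hP₀ : IsTransMat P₀) (hP₁ : IsTransMat P₁)
    (hP₀pos : ∀ x y, 0 < P₀ x y) (hP₁pos : ∀ x y, 0 < P₁ x y)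
    (π₀ : ℝ) (hπ₀ : π₀ ∈ Set.Ioo (0 : ℝ) 1)
    (Pe : ℕ → ℝ)
    (hPe : ∀ n : ℕ, 1 ≤ n → Pe n =
      sInf {r : ℝ | ∃ A : Set (Fin n → X × X),
        r = π₀ * prodProb (fun z => π z.1 * P₀ z.1 z.2) A
          + (1 - π₀) * prodProb (fun z => π z.1 * P₁ z.1 z.2) Aᶜ})
    (C : ℝ)
    (hC : C = sSup {c : ℝ | ∃ α ∈ Set.Icc (0 : ℝ) 1,
      c = - Real.log (∑ x, ∑ y, π x * P₀ x y ^ α * P₁ x y ^ (1 - α))}) :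
    Tendsto (fun n : ℕ => -(1 / n : ℝ) * Real.log (Pe n)) atTop (nhds C) := by
  set Q₀ : X × X → ℝ := fun z => π z.1 * P₀ z.1 z.2
  set Q₁ : X × X → ℝ := fun z => π z.1 * P₁ z.1 z.2
  have hQ₀ : ∀ z, 0 < Q₀ z := fun z => mul_pos (hπ _) (hP₀pos _ _)
  have hQ₁ : ∀ z, 0 < Q₁ z := fun z => mul_pos (hπ _) (hP₁pos _ _)
  obtain ⟨α, hα, hmin⟩ := exists_mem_Ioo_isMinOn_chernoffCoeff hQ₀ hQ₁
    (sum_edgeMeasure_eq_one hπ1 hP₀) (sum_edgeMeasure_eq_one hπ1 hP₁)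
  have hCα : C = -Real.log (chernoffCoeff Q₀ Q₁ α) := by
    simp_rw [hC, ← chernoffCoeff_edgeMeasure (fun x => (hπ x).le) hP₀.1 hP₁.1]
    exact sSup_neg_log_chernoffCoeff hQ₀ hQ₁ (Ioo_subset_Icc_self hα) hmin
  rw [hCα]
  refine (tendsto_neg_inv_mul_log_bayesError hQ₀ hQ₁ hπ₀ (Ioo_subset_Icc_self hα)
    (sum_tilted_mul_logLikelihoodRatio_eq_zero hQ₀ hQ₁ hα hmin)).congr' ?_
  filter_upwards [eventually_ge_atTop 1] with n hn
  rw [hPe n hn, sInf_bayesRisk_eq_sum_min]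
  rfl
end
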